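/- arXiv:2102.10170 — 5 statements merged into one kernel-verified Lean document; each statement's English description precedes it below -/
import Mathlib

section
/- For every nonnegative integer n, the integral over the real line of x^(2n) / (x^2 + 1)^(n+1) dx equals (π / 4^n) * binomial(2n, n). -/
/-!
Substituting `x = tan θ` turns `x ^ (2n) / (x ^ 2 + 1) ^ (n + 1) dx` into `sin θ ^ (2n) dθ` on
`(-π/2, π/2)`. Since `sin ^ (2n)` is `π`-periodic this is the Wallis integral `∫₀^π sin ^ (2n)`,
which equals `π ∏_{i<n} (2i+1)/(2i+2) = π · C(2n, n) / 4 ^ n`.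
-/

open MeasureTheory Real

theorem Nat.prod_range_odd_div_even_eq_centralBinom_div (n : ℕ) :
    ∏ i ∈ Finset.range n, (2 * (i : ℝ) + 1) / (2 * i + 2) = n.centralBinom / 4 ^ n := by
  induction n with
  | zero => simp
  | succ k ih =>
    have hrec : ((k : ℝ) + 1) * (k + 1).centralBinom = 2 * (2 * k + 1) * k.centralBinom := by
      exact_mod_cast Nat.succ_mul_centralBinom_succ k
    rw [Finset.prod_range_succ, ih]
    field_simp
    linear_combination (-2 * 4 ^ k : ℝ) * hrec

theorem integral_eq_setIntegral_Ioo_comp_tan {E : Type*} [NormedAddCommGroup E]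
    [NormedSpace ℝ E] (f : ℝ → E) :
    ∫ x, f x = ∫ θ in Set.Ioo (-(π / 2)) (π / 2), (1 / cos θ ^ 2) • f (tan θ) := by
  rw [← setIntegral_univ, ← image_tan_Ioo,
    integral_image_eq_integral_abs_deriv_smul measurableSet_Ioo
      (fun θ hθ => (hasDerivAt_tan (cos_pos_of_mem_Ioo hθ).ne').hasDerivWithinAt) injOn_tan]
  refine setIntegral_congr_fun measurableSet_Ioo fun θ _ => ?_
  rw [abs_of_nonneg (by positivity)]

theorem one_div_cos_sq_mul_tan_pow_div_eq_sin_pow {θ : ℝ} (h : cos θ ≠ 0) (n : ℕ) :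
    1 / cos θ ^ 2 * (tan θ ^ (2 * n) / (tan θ ^ 2 + 1) ^ (n + 1)) = sin θ ^ (2 * n) := by
  rw [add_comm, ← inv_inv (1 + tan θ ^ 2), inv_one_add_tan_sq h, tan_eq_sin_div_cos, pow_mul,
    pow_mul, div_pow, inv_pow, div_inv_eq_mul, div_pow]
  field_simp
  ring

theorem periodic_sin_pow_even (n : ℕ) : Function.Periodic (fun x => sin x ^ (2 * n)) π := by
  intro x
  simp only [sin_add_pi, pow_mul, neg_sq]

theorem stmt0 (n : ℕ) :
    ∫ x : ℝ, x ^ (2 * n) / (x ^ 2 + 1) ^ (n + 1) =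
      (π / 4 ^ n) * (Nat.choose (2 * n) n) := by
  calc ∫ x : ℝ, x ^ (2 * n) / (x ^ 2 + 1) ^ (n + 1)
      = ∫ θ in Set.Ioo (-(π / 2)) (π / 2), sin θ ^ (2 * n) := by
        rw [integral_eq_setIntegral_Ioo_comp_tan]
        exact setIntegral_congr_fun measurableSet_Ioo fun θ hθ =>
          one_div_cos_sq_mul_tan_pow_div_eq_sin_pow (cos_pos_of_mem_Ioo hθ).ne' n
    _ = ∫ θ in -(π / 2)..-(π / 2) + π, sin θ ^ (2 * n) := by
        rw [show -(π / 2) + π = π / 2 by ring,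
          intervalIntegral.integral_of_le (by linarith [pi_pos]), integral_Ioc_eq_integral_Ioo]
    _ = ∫ θ in 0..π, sin θ ^ (2 * n) := by
        simpa using (periodic_sin_pow_even n).intervalIntegral_add_eq (-(π / 2)) 0
    _ = (π / 4 ^ n) * (Nat.choose (2 * n) n) := by
        rw [integral_sin_pow_even, Nat.prod_range_odd_div_even_eq_centralBinom_div,
          Nat.centralBinom_eq_two_mul_choose]
        ring
end

section
/- For every nonnegative integer n, the sequence I(n) = ∫_{-∞}^{∞} x^(2n)/(x^2+1)^(n+1) dx satisfies the recurrence 2(n+1) I(n+1) = (2n+1) I(n). -/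
open MeasureTheory Filter Topology

/-! Integration by parts in disguise: `F x = x ^ (2n + 1) / (x² + 1) ^ (n + 1)` vanishes at `±∞`
and its derivative is the integrand of `(2n + 1) I(n) - 2(n + 1) I(n + 1)`, so that combination
integrates to `0`. All integrands are `O(1 / (1 + x²))`, hence integrable. -/

lemma integrable_pow_div_sq_add_one_pow {m n : ℕ} (hmn : m ≤ n) :
    Integrable (fun x : ℝ => x ^ (2 * m) / (x ^ 2 + 1) ^ (n + 1)) := by
  have hcont : Continuous (fun x : ℝ => x ^ (2 * m) / (x ^ 2 + 1) ^ (n + 1)) :=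
    (continuous_pow _).div (by fun_prop) fun x => by positivity
  refine integrable_inv_one_add_sq.mono' hcont.aestronglyMeasurable (ae_of_all _ fun x => ?_)
  have hpos : 0 < 1 + x ^ 2 := by positivity
  calc ‖x ^ (2 * m) / (x ^ 2 + 1) ^ (n + 1)‖ = (x ^ 2) ^ m / (1 + x ^ 2) ^ (n + 1) := by
        rw [pow_mul, Real.norm_of_nonneg (by positivity), add_comm]
    _ ≤ (1 + x ^ 2) ^ n / (1 + x ^ 2) ^ (n + 1) := by
        gcongr
        exact (pow_le_pow_left₀ (by positivity) (by linarith) m).trans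
          (pow_le_pow_right₀ (by linarith [sq_nonneg x]) hmn)
    _ = (1 + x ^ 2)⁻¹ := by rw [pow_succ (1 + x ^ 2) n, div_mul_cancel_left₀ (pow_pos hpos n).ne']

lemma abs_odd_pow_div_sq_add_one_pow_le (n : ℕ) (x : ℝ) :
    |x ^ (2 * n + 1) / (x ^ 2 + 1) ^ (n + 1)| ≤ |x|⁻¹ := by
  rcases eq_or_ne x 0 with rfl | hx
  · simp
  have hpos : 0 < x ^ 2 + 1 := by positivity
  -- equivalently `x ^ (2 * (n + 1)) ≤ (x ^ 2 + 1) ^ (n + 1)`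
  rw [le_inv_comm₀ (by positivity) (by positivity), abs_div, abs_of_pos (pow_pos hpos _), abs_pow,
    inv_div, le_div_iff₀ (by positivity), ← pow_succ', show 2 * n + 1 + 1 = 2 * (n + 1) by ring,
    pow_mul, sq_abs]
  exact pow_le_pow_left₀ (sq_nonneg x) (by linarith) _

lemma tendsto_odd_pow_div_sq_add_one_pow_cocompact (n : ℕ) :
    Tendsto (fun x : ℝ => x ^ (2 * n + 1) / (x ^ 2 + 1) ^ (n + 1)) (cocompact ℝ) (𝓝 0) :=
  squeeze_zero_norm (abs_odd_pow_div_sq_add_one_pow_le n)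
    (tendsto_inv_atTop_zero.comp tendsto_norm_cocompact_atTop)

lemma hasDerivAt_odd_pow_div_sq_add_one_pow (n : ℕ) (x : ℝ) :
    HasDerivAt (fun x : ℝ => x ^ (2 * n + 1) / (x ^ 2 + 1) ^ (n + 1))
      ((2 * n + 1) * (x ^ (2 * n) / (x ^ 2 + 1) ^ (n + 1))
        - 2 * (n + 1) * (x ^ (2 * (n + 1)) / (x ^ 2 + 1) ^ (n + 1 + 1))) x := by
  have hpos : 0 < x ^ 2 + 1 := by positivity
  refine ((hasDerivAt_pow (2 * n + 1) x).fun_div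
    (((hasDerivAt_pow 2 x).add_const 1).fun_pow (n + 1)) (pow_pos hpos _).ne').congr_deriv ?_
  simp only [Nat.add_sub_cancel]
  field_simp
  push_cast
  ring

theorem stmt1 (I : ℕ → ℝ)
    (hI : ∀ n : ℕ, I n = ∫ x : ℝ, x ^ (2 * n) / (x ^ 2 + 1) ^ (n + 1)) :
    ∀ n : ℕ, 2 * (n + 1 : ℝ) * I (n + 1) = (2 * n + 1 : ℝ) * I n := by
  intro n
  have hn := integrable_pow_div_sq_add_one_pow (le_refl n)
  have hn1 := integrable_pow_div_sq_add_one_pow (le_refl (n + 1))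
  have hF := tendsto_odd_pow_div_sq_add_one_pow_cocompact n
  have hzero := integral_of_hasDerivAt_of_tendsto (hasDerivAt_odd_pow_div_sq_add_one_pow n)
    ((hn.const_mul _).sub (hn1.const_mul _))
    (hF.mono_left atBot_le_cocompact) (hF.mono_left atTop_le_cocompact)
  rw [integral_sub (hn.const_mul _) (hn1.const_mul _), integral_const_mul, integral_const_mul,
    ← hI, ← hI, sub_self, sub_eq_zero] at hzero
  exact_mod_cast hzero.symm
end

section
/- For every nonnegative integer n, the sum over k from 0 to n of binomial(n,k) * (-1)^k / (n+k+1) equals 1 / ((2n+1) * binomial(2n, n)). -/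
/-!
Up to the sign `(-1)ⁿ`, the sum is the `n`-th forward difference of `y ↦ 1 / y` at `y = n + 1`.
By induction, `Δⁿ (1 / y) = (-1)ⁿ n! / (y (y + 1) ⋯ (y + n))`, and at `y = n + 1` the denominator
is `(2n + 1)! / n!`.
-/

open Finset Nat

theorem fwdDiff_iter_inv {K : Type*} [Field K] (n : ℕ) (x : K) (hx : ∀ k ≤ n, x + k ≠ 0) :
    (fwdDiff 1)^[n] (fun y : K ↦ y⁻¹) x = (-1) ^ n * n ! / ∏ k ∈ range (n + 1), (x + k) := by
  induction n generalizing x with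
  | zero => simp
  | succ n ih =>
    have hx1 : ∀ k ≤ n, x + 1 + k ≠ 0 := fun k hk ↦ by
      simpa [add_assoc, add_comm (1 : K)] using hx (k + 1) (by omega)
    have hshift : ∏ k ∈ range (n + 2), (x + k) = (∏ k ∈ range (n + 1), (x + 1 + k)) * x := by
      simp [prod_range_succ' _ (n + 1), add_assoc, add_comm (1 : K)]
    have hprod_ne : ∏ k ∈ range (n + 1), (x + k) ≠ 0 :=
      prod_ne_zero_iff.2 fun k hk ↦ hx k (by simp at hk; omega)
    have hprod_shift_ne : ∏ k ∈ range (n + 1), (x + 1 + k) ≠ 0 :=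
      prod_ne_zero_iff.2 fun k hk ↦ hx1 k (by simp at hk; omega)
    have hx_ne : x ≠ 0 := by simpa using hx 0 (by omega)
    have hxn_ne : x + (n + 1) ≠ 0 := by simpa using hx (n + 1) le_rfl
    rw [Function.iterate_succ_apply', fwdDiff, ih x fun k hk ↦ hx k (by omega), ih (x + 1) hx1]
    rw [prod_range_succ _ (n + 1), Nat.cast_succ] at hshift ⊢
    generalize ∏ k ∈ range (n + 1), (x + k) = P at *
    generalize ∏ k ∈ range (n + 1), (x + 1 + k) = Q at *
    rw [Nat.factorial_succ]
    push_cast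
    field_simp
    linear_combination (-1) ^ n * (n ! : K) * hshift

theorem alternating_sum_range_choose_div_add {K : Type*} [Field K] (n : ℕ) (x : K)
    (hx : ∀ k ≤ n, x + k ≠ 0) :
    ∑ k ∈ range (n + 1), (-1) ^ k * n.choose k / (x + k) = n ! / ∏ k ∈ range (n + 1), (x + k) := by
  have h := congr_arg ((-1) ^ n * ·) (fwdDiff_iter_inv n x hx)
  simp only [fwdDiff_iter_eq_sum_shift, mul_sum] at h
  rw [← mul_div_assoc, ← mul_assoc, ← pow_add, Even.neg_one_pow ⟨n, rfl⟩, one_mul] at h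
  rw [← h]
  refine sum_congr rfl fun k hk ↦ ?_
  obtain ⟨j, rfl⟩ := Nat.exists_eq_add_of_le (mem_range_succ_iff.1 hk)
  have hsign : ((-1 : K) ^ (k + j) * (-1) ^ j) = (-1) ^ k := by
    rw [pow_add, mul_assoc, ← pow_add, Even.neg_one_pow ⟨j, rfl⟩, mul_one]
  simp only [add_tsub_cancel_left, nsmul_one, zsmul_eq_mul]
  push_cast
  rw [← hsign]
  ring

theorem stmt11 (n : ℕ) :
    ∑ k ∈ Finset.range (n + 1), (Nat.choose n k : ℚ) * (-1) ^ k / (n + k + 1) =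
      1 / ((2 * n + 1) * Nat.choose (2 * n) n) := by
  have hprod : ∏ k ∈ range (n + 1), ((n + 1 : ℕ) + k : ℚ) = (n + (n + 1)) ! / n ! := by
    rw [eq_div_iff (by positivity), mul_comm, ← factorial_mul_ascFactorial,
      ascFactorial_eq_prod_range]
    push_cast
    rfl
  have hfactorial : ((n + (n + 1)) ! : ℚ) = (2 * n + 1) * (2 * n).choose n * n ! * n ! := by
    rw [← add_assoc, factorial_succ, ← add_choose_mul_factorial_mul_factorial, ← two_mul]
    push_cast
    ring
  calc ∑ k ∈ range (n + 1), (n.choose k : ℚ) * (-1) ^ k / (n + k + 1)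
      = ∑ k ∈ range (n + 1), (-1) ^ k * n.choose k / (((n + 1 : ℕ) : ℚ) + k) :=
        sum_congr rfl fun k _ ↦ by push_cast; ring
    _ = n ! / ∏ k ∈ range (n + 1), (((n + 1 : ℕ) : ℚ) + k) :=
        alternating_sum_range_choose_div_add n _ fun k _ ↦ by positivity
    _ = 1 / ((2 * n + 1) * (2 * n).choose n) := by
        rw [hprod, hfactorial]
        field_simp
end

section
/- The sequence I(n) = ∫_0^1 e^(-x) (x(1-x))^n dx satisfies the recurrence I(n+2) + 2(2n+3)(n+2) I(n+1) - (n+1)(n+2) I(n) = 0 for every nonnegative integer n. -/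
/-!
The combination `u^(n+2) + 2(2n+3)(n+2) u^(n+1) - (n+1)(n+2) u^n`, with `u = x(1-x)`, times
`e^(-x)` is the derivative of `-e^(-x) (u + (n+2)(1-2x)) u^(n+1)`, which vanishes at `0` and `1`
because `u` does.
-/

open Real intervalIntegral

lemma hasDerivAt_exp_neg_mul_pow_recurrence (n : ℕ) (x : ℝ) :
    HasDerivAt
      (fun x : ℝ =>
        -(exp (-x) * ((x * (1 - x) + (n + 2) * (1 - 2 * x)) * (x * (1 - x)) ^ (n + 1))))
      (exp (-x) * (x * (1 - x)) ^ (n + 2)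
        + 2 * (2 * n + 3) * (n + 2) * (exp (-x) * (x * (1 - x)) ^ (n + 1))
        - (n + 1) * (n + 2) * (exp (-x) * (x * (1 - x)) ^ n)) x := by
  have hexp : HasDerivAt (fun x : ℝ => exp (-x)) (-exp (-x)) x := by
    simpa using (hasDerivAt_neg x).exp
  have hu : HasDerivAt (fun x : ℝ => x * (1 - x)) (1 - 2 * x) x :=
    ((hasDerivAt_id' x).fun_mul ((hasDerivAt_id' x).const_sub 1)).congr_deriv (by ring)
  have hpow : HasDerivAt (fun x : ℝ => (x * (1 - x)) ^ (n + 1))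
      ((n + 1) * (x * (1 - x)) ^ n * (1 - 2 * x)) x := by
    simpa using hu.fun_pow (n + 1)
  have hlin : HasDerivAt (fun x : ℝ => x * (1 - x) + (n + 2) * (1 - 2 * x))
      (1 - 2 * x - 2 * (n + 2)) x :=
    (hu.fun_add ((((hasDerivAt_id' x).const_mul 2).const_sub 1).const_mul _)).congr_deriv
      (by ring)
  exact (hexp.fun_mul (hlin.fun_mul hpow)).fun_neg.congr_deriv (by ring)

theorem integral_exp_neg_mul_pow_recurrence (n : ℕ) :
    (∫ x in (0 : ℝ)..1, exp (-x) * (x * (1 - x)) ^ (n + 2))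
      + 2 * (2 * n + 3) * (n + 2) * (∫ x in (0 : ℝ)..1, exp (-x) * (x * (1 - x)) ^ (n + 1))
      - (n + 1) * (n + 2) * (∫ x in (0 : ℝ)..1, exp (-x) * (x * (1 - x)) ^ n) = 0 := by
  have hint (k : ℕ) :
      IntervalIntegrable (fun x : ℝ => exp (-x) * (x * (1 - x)) ^ k) MeasureTheory.volume 0 1 :=
    (by fun_prop : Continuous _).intervalIntegrable 0 1
  rw [← integral_const_mul, ← integral_const_mul, ← integral_add (hint _) ((hint _).const_mul _),
    ← integral_sub ((hint _).add ((hint _).const_mul _)) ((hint _).const_mul _),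
    integral_eq_sub_of_hasDerivAt (fun x _ => hasDerivAt_exp_neg_mul_pow_recurrence n x)
      (((hint _).add ((hint _).const_mul _)).sub ((hint _).const_mul _))]
  simp

theorem stmt13 (I : ℕ → ℝ)
    (hI : ∀ n : ℕ, I n = ∫ x in (0 : ℝ)..1, Real.exp (-x) * (x * (1 - x)) ^ n) :
    ∀ n : ℕ, I (n + 2) + 2 * (2 * n + 3) * (n + 2) * I (n + 1)
      - (n + 1) * (n + 2) * I n = 0 := by
  intro n
  simp only [hI]
  exact integral_exp_neg_mul_pow_recurrence n
end

section
/- There exist integer sequences a(n) and b(n) such that for every positive integer n, ∫_0^1 e^(-x)(x(1-x))^n dx = a(n) + b(n) * e^(-1), with a(1) = -1, b(1) = 3, a(2) = 14, b(2) = -38, and both a and b satisfy the recurrence c(n+2) = -2(2n+3)(n+2) c(n+1) + (n+1)(n+2) c(n). -/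
/-!
Write `p x = x * (1 - x)`. Since `p' = 1 - 2x` satisfies `p'^2 = 1 - 4p`, the function
`-e^{-x} (p^{n+2} + (n+2) p^{n+1} p')` is an antiderivative of
`e^{-x} (p^{n+2} + 2(2n+3)(n+2) p^{n+1} - (n+1)(n+2) p^n)`, and it vanishes at `0` and `1`.
So `I n = ∫₀¹ e^{-x} p^n` obeys the three-term recurrence for every `n`, and starting from
`I 0 = 1 - e⁻¹`, `I 1 = -1 + 3e⁻¹` both coordinates of `I n` in the basis `1, e⁻¹` are
integers satisfying the same recurrence.
-/

open Real intervalIntegral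

def recSeq (c₀ c₁ : ℤ) : ℕ → ℤ
  | 0 => c₀
  | 1 => c₁
  | n + 2 =>
    -2 * (2 * n + 3) * (n + 2) * recSeq c₀ c₁ (n + 1) + (n + 1) * (n + 2) * recSeq c₀ c₁ n

theorem recSeq_add_two (c₀ c₁ : ℤ) (n : ℕ) :
    recSeq c₀ c₁ (n + 2) =
      -2 * (2 * n + 3) * (n + 2) * recSeq c₀ c₁ (n + 1)
        + (n + 1) * (n + 2) * recSeq c₀ c₁ n :=
  rfl

theorem eq_recSeq_add_recSeq_mul {R : Type*} [CommRing R] (u : ℕ → R) (e : R)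
    (c₀ c₁ d₀ d₁ : ℤ)
    (h₀ : u 0 = c₀ + d₀ * e) (h₁ : u 1 = c₁ + d₁ * e)
    (hu : ∀ n : ℕ, u (n + 2) = -2 * (2 * n + 3) * (n + 2) * u (n + 1) + (n + 1) * (n + 2) * u n)
    (n : ℕ) : u n = recSeq c₀ c₁ n + recSeq d₀ d₁ n * e := by
  induction n using Nat.twoStepInduction with
  | zero => exact h₀
  | one => exact h₁
  | more n ih ih' =>
    rw [hu, ih, ih', recSeq_add_two, recSeq_add_two]
    push_cast
    ring

noncomputable def expPowIntegral (n : ℕ) : ℝ :=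
  ∫ x in (0 : ℝ)..1, exp (-x) * (x * (1 - x)) ^ n

theorem expPowIntegral_zero : expPowIntegral 0 = 1 + -1 * exp (-1) := by
  simp [expPowIntegral, integral_comp_neg]
  ring

theorem expPowIntegral_one : expPowIntegral 1 = -1 + 3 * exp (-1) := by
  have hF (x : ℝ) :
      HasDerivAt (fun t => exp (-t) * (t ^ 2 + t + 1)) (exp (-x) * (x * (1 - x)) ^ 1) x :=
    (((hasDerivAt_neg x).exp).mul
      (((hasDerivAt_pow 2 x).add (hasDerivAt_id x)).add_const 1)).congr_deriv (by simp; ring)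
  rw [expPowIntegral, integral_eq_sub_of_hasDerivAt (fun x _ => hF x)
    ((by fun_prop : Continuous _).intervalIntegrable _ _)]
  norm_num
  ring

theorem hasDerivAt_recurrence_primitive (n : ℕ) (x : ℝ) :
    HasDerivAt
      (fun t => -(exp (-t) *
        ((t * (1 - t)) ^ (n + 2) + (n + 2) * (t * (1 - t)) ^ (n + 1) * (1 - 2 * t))))
      (exp (-x) * (x * (1 - x)) ^ (n + 2)
        + 2 * (2 * n + 3) * (n + 2) * (exp (-x) * (x * (1 - x)) ^ (n + 1))
        - (n + 1) * (n + 2) * (exp (-x) * (x * (1 - x)) ^ n)) x := by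
  have hp : HasDerivAt (fun t : ℝ => t * (1 - t)) (1 - 2 * x) x :=
    ((hasDerivAt_id x).mul ((hasDerivAt_id x).const_sub 1)).congr_deriv (by simp; ring)
  have hp' : HasDerivAt (fun t : ℝ => 1 - 2 * t) (-2) x := by
    simpa using ((hasDerivAt_id x).const_mul 2).const_sub 1
  have h₂ : HasDerivAt (fun t : ℝ => (t * (1 - t)) ^ (n + 2))
      ((n + 2) * (x * (1 - x)) ^ (n + 1) * (1 - 2 * x)) x := by
    simpa using hp.fun_pow (n + 2)
  have h₁ : HasDerivAt (fun t : ℝ => (t * (1 - t)) ^ (n + 1))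
      ((n + 1) * (x * (1 - x)) ^ n * (1 - 2 * x)) x := by
    simpa using hp.fun_pow (n + 1)
  refine (((hasDerivAt_neg x).exp).fun_mul
    (h₂.fun_add ((h₁.const_mul ((n : ℝ) + 2)).fun_mul hp'))).neg.congr_deriv ?_
  simp only [pow_succ]
  ring

theorem expPowIntegral_add_two (n : ℕ) :
    expPowIntegral (n + 2) =
      -2 * (2 * n + 3) * (n + 2) * expPowIntegral (n + 1)
        + (n + 1) * (n + 2) * expPowIntegral n := by
  have hint (k : ℕ) :
      IntervalIntegrable (fun x : ℝ => exp (-x) * (x * (1 - x)) ^ k) MeasureTheory.volume 0 1 :=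
    (by fun_prop : Continuous _).intervalIntegrable _ _
  have h := integral_eq_sub_of_hasDerivAt (fun x _ => hasDerivAt_recurrence_primitive n x)
    (((hint _).add ((hint _).const_mul _)).sub ((hint _).const_mul _))
  rw [integral_sub ((hint _).add ((hint _).const_mul _)) ((hint _).const_mul _),
    integral_add (hint _) ((hint _).const_mul _), integral_const_mul, integral_const_mul] at h
  simp only [expPowIntegral]
  norm_num at h
  linarith

theorem expPowIntegral_eq (n : ℕ) :
    expPowIntegral n = recSeq 1 (-1) n + recSeq (-1) 3 n * exp (-1) :=
  eq_recSeq_add_recSeq_mul _ _ _ _ _ _ (by simpa using expPowIntegral_zero)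
    (by simpa using expPowIntegral_one) expPowIntegral_add_two n

theorem stmt15 :
    ∃ a b : ℕ → ℤ,
      (∀ n : ℕ, 1 ≤ n →
        (∫ x in (0 : ℝ)..1, Real.exp (-x) * (x * (1 - x)) ^ n) =
          (a n : ℝ) + (b n : ℝ) * Real.exp (-1)) ∧
      a 1 = -1 ∧ b 1 = 3 ∧ a 2 = 14 ∧ b 2 = -38 ∧
      (∀ n : ℕ, 1 ≤ n →
        a (n + 2) = -2 * (2 * n + 3) * (n + 2) * a (n + 1) + (n + 1) * (n + 2) * a n) ∧
      (∀ n : ℕ, 1 ≤ n →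
        b (n + 2) = -2 * (2 * n + 3) * (n + 2) * b (n + 1) + (n + 1) * (n + 2) * b n) :=
  ⟨recSeq 1 (-1), recSeq (-1) 3, fun n _ => expPowIntegral_eq n, rfl, rfl, rfl, rfl,
    fun n _ => recSeq_add_two _ _ n, fun n _ => recSeq_add_two _ _ n⟩
end
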